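/- arXiv:1808.09537 — 2 statements merged into one kernel-verified Lean document; each statement's English description precedes it below -/
import Mathlib

section
/- In Matrix (Fin 3) (Fin 3) ℂ let Q1 = 1 (the identity), Q2 = !![0,1,0;1,0,0;0,0,1], and Q3 = !![0,0,1;0,0,1;1,1,1]. Then: (i) Q3·e0 = e2, Q3·e1 = e2 and Q3·e2 = e0 + e1 + e2 for the standard basis vectors e0, e1, e2; (ii) Q2·Q2 = Q1; (iii) Q2·Q3 = Q3 and Q3·Q2 = Q3; (iv) Q3·Q3 = Q1 + Q2 + Q3. -/
open Matrix

/-- `Q1 = W^{(1,1)}`: the identity (vacuum quasiparticle) operator of `D_3(ℤ_2)`. -/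
def Q1 : Matrix (Fin 3) (Fin 3) ℂ := 1

/-- `Q2 = Θ(1) = W^{(1,2)}`: the permutation operator of `D_3(ℤ_2)`. -/
def Q2 : Matrix (Fin 3) (Fin 3) ℂ := !![0, 1, 0; 1, 0, 0; 0, 0, 1]

/-- `Q3 = W^{(1,3)}`: the operator with non-Abelian fusion of `D_3(ℤ_2)`. -/
def Q3 : Matrix (Fin 3) (Fin 3) ℂ := !![0, 0, 1; 0, 0, 1; 1, 1, 1]

/-- The fusion rules of Table 2, in particular `Q3 · Q3 = Q1 + Q2 + Q3` is non-Abelian. -/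
theorem stmt_8 :
    (Q3 *ᵥ Pi.single (0 : Fin 3) (1 : ℂ) = Pi.single (2 : Fin 3) (1 : ℂ) ∧
      Q3 *ᵥ Pi.single (1 : Fin 3) (1 : ℂ) = Pi.single (2 : Fin 3) (1 : ℂ) ∧
      Q3 *ᵥ Pi.single (2 : Fin 3) (1 : ℂ) =
        Pi.single (0 : Fin 3) (1 : ℂ) + Pi.single (1 : Fin 3) (1 : ℂ) +
          Pi.single (2 : Fin 3) (1 : ℂ)) ∧
    Q2 * Q2 = Q1 ∧
    (Q2 * Q3 = Q3 ∧ Q3 * Q2 = Q3) ∧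
    Q3 * Q3 = Q1 + Q2 + Q3 := by
  refine ⟨⟨?_, ?_, ?_⟩, ?_, ⟨?_, ?_⟩, ?_⟩
  · funext i; fin_cases i <;>
      simp [Q3, mulVec, dotProduct, Fin.sum_univ_succ, Pi.single_apply]
  · funext i; fin_cases i <;>
      simp [Q3, mulVec, dotProduct, Fin.sum_univ_succ, Pi.single_apply]
  · funext i; fin_cases i <;>
      simp [Q3, mulVec, dotProduct, Fin.sum_univ_succ, Pi.single_apply]
  all_goals
    ext i j <;> fin_cases i <;> fin_cases j <;>
      simp [Q1, Q2, Q3, Matrix.mul_apply, Fin.sum_univ_succ, Matrix.one_apply,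
        Matrix.vecHead, Matrix.vecTail] <;> ring
end

section
/- Let Θ : ZMod 2 → Matrix (Fin 3) (Fin 3) ℂ be given by Θ(0) = 1 and Θ(1) = !![0,1,0;1,0,0;0,0,1], and let X = !![0,0,1;1,0,0;0,1,0] be the cyclic shift on ℂ³. On the space V = ((Fin 3 × ZMod 2 × Fin 3) → ℂ), for R ∈ ZMod 3 define the diagonal linear map C_R : V → V which multiplies the basis vector indexed by (α, g, β) by the scalar ((Θ(g))⁻¹ · X^{R.val})_{α,β}. Then the C_R are pairwise orthogonal idempotents summing to the identity: C_R ∘ C_{R'} = (if R = R' then C_R else 0) for all R, R' ∈ ZMod 3, and Σ_{R ∈ ZMod 3} C_R = id. -/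
/-- `Θ : ℤ_2 → GL(ℂ³)`: the representation of the gauge group `ℤ_2` on the
three-dimensional matter space of `D_3(ℤ_2)`. -/
noncomputable def Theta : ZMod 2 → Matrix (Fin 3) (Fin 3) ℂ := fun g =>
  if g = 0 then 1 else !![0, 1, 0; 1, 0, 0; 0, 0, 1]

/-- The cyclic shift matrix `X` on `ℂ³`. -/
noncomputable def X3 : Matrix (Fin 3) (Fin 3) ℂ := !![0, 0, 1; 1, 0, 0; 0, 1, 0]

/-- The edge operator `C_R` of `D_3(ℤ_2)`, acting diagonally on the Hilbert space of one
edge together with its two endpoint matter fields: the basis vector indexed by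
`(α, g, β)` is multiplied by the scalar `((Θ g)⁻¹ · X^R)_{α,β}`. -/
noncomputable def Cedge (R : ZMod 3) :
    ((Fin 3 × ZMod 2 × Fin 3) → ℂ) →ₗ[ℂ] ((Fin 3 × ZMod 2 × Fin 3) → ℂ) where
  toFun f := fun p => ((Theta p.2.1)⁻¹ * X3 ^ R.val) p.1 p.2.2 * f p
  map_add' f g := by funext p; simp [mul_add]
  map_smul' c f := by
    funext p
    simp only [Pi.smul_apply, smul_eq_mul, RingHom.id_apply]
    ring

lemma Theta_inv (g : ZMod 2) : (Theta g)⁻¹ = Theta g := by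
  have h : Theta g * Theta g = 1 := by
    have hg : g = 0 ∨ g = 1 := by revert g; decide
    rcases hg with hg | hg <;> subst hg <;>
      simp [Theta, Matrix.mul_fin_three, Matrix.one_fin_three]
  exact Matrix.inv_eq_right_inv h

lemma zmod3_cases (R : ZMod 3) : R = 0 ∨ R = 1 ∨ R = 2 := by revert R; decide

lemma X3_pow0 : X3 ^ (0 : ZMod 3).val = 1 := by
  rw [show (0 : ZMod 3).val = 0 from rfl, pow_zero]
lemma X3_pow1 : X3 ^ (1 : ZMod 3).val = X3 := by
  rw [show (1 : ZMod 3).val = 1 from rfl, pow_one]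
lemma X3_pow2 : X3 ^ (2 : ZMod 3).val = !![0,1,0;0,0,1;1,0,0] := by
  rw [show (2 : ZMod 3).val = 2 from rfl, pow_two]
  simp [X3, Matrix.mul_fin_three]

lemma Mat0 (g : ZMod 2) : (Theta g)⁻¹ * X3 ^ (0 : ZMod 3).val =
    if g = 0 then 1 else !![0,1,0;1,0,0;0,0,1] := by
  rw [Theta_inv, X3_pow0, mul_one]; rfl

lemma Mat1 (g : ZMod 2) : (Theta g)⁻¹ * X3 ^ (1 : ZMod 3).val =
    if g = 0 then X3 else !![1,0,0;0,0,1;0,1,0] := by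
  rw [Theta_inv, X3_pow1]
  have hg : g = 0 ∨ g = 1 := by revert g; decide
  rcases hg with hg | hg <;> subst hg <;>
    simp [Theta, X3, Matrix.mul_fin_three, Matrix.one_fin_three]

lemma Mat2 (g : ZMod 2) : (Theta g)⁻¹ * X3 ^ (2 : ZMod 3).val =
    if g = 0 then !![0,1,0;0,0,1;1,0,0] else !![0,0,1;0,1,0;1,0,0] := by
  rw [Theta_inv, X3_pow2]
  have hg : g = 0 ∨ g = 1 := by revert g; decide
  rcases hg with hg | hg <;> subst hg <;>
    simp [Theta, Matrix.mul_fin_three, Matrix.one_fin_three]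

/-- The edge operators `C_{j,1}, C_{j,2}, C_{j,3}` of `D_3(ℤ_2)` are pairwise orthogonal
idempotents summing to the identity. -/
theorem stmt_11 :
    (∀ R R' : ZMod 3, Cedge R ∘ₗ Cedge R' = if R = R' then Cedge R else 0) ∧
    ∑ R : ZMod 3, Cedge R = LinearMap.id := by
  have h2 : (1 : ZMod 2) ≠ 0 := by decide
  have h31 : (1 : ZMod 3) ≠ 0 := by decide
  have h32 : (2 : ZMod 3) ≠ 0 := by decide
  have h33 : (2 : ZMod 3) ≠ 1 := by decide
  have h34 : (1 : ZMod 3) ≠ 2 := by decide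
  have h35 : (0 : ZMod 3) ≠ 1 := by decide
  have h36 : (0 : ZMod 3) ≠ 2 := by decide
  have prod : ∀ (g : ZMod 2) (R R' : ZMod 3) (α β : Fin 3),
      ((Theta g)⁻¹ * X3 ^ R.val) α β * ((Theta g)⁻¹ * X3 ^ R'.val) α β =
        if R = R' then ((Theta g)⁻¹ * X3 ^ R.val) α β else 0 := by
    intro g R R' α β
    have hg : g = 0 ∨ g = 1 := by revert g; decide
    rcases hg with hg | hg <;> subst hg <;>
      rcases zmod3_cases R with hR | hR | hR <;> subst hR <;>
      rcases zmod3_cases R' with hR' | hR' | hR' <;> subst hR' <;>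
      simp only [Mat0, Mat1, Mat2, if_pos rfl, if_neg h2, if_neg h31, if_neg h32,
        if_neg h33, if_neg h34, if_neg h35, if_neg h36, ite_true, ite_false] <;>
      fin_cases α <;> fin_cases β <;>
      simp [X3, Matrix.one_fin_three, Matrix.vecHead, Matrix.vecTail]
  have sum1 : ∀ (g : ZMod 2) (α β : Fin 3),
      ∑ R : ZMod 3, ((Theta g)⁻¹ * X3 ^ R.val) α β = 1 := by
    intro g α β
    rw [show (Finset.univ : Finset (ZMod 3)) = {0, 1, 2} from rfl]
    rw [Finset.sum_insert (by decide), Finset.sum_insert (by decide), Finset.sum_singleton]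
    rw [Mat0, Mat1, Mat2]
    have hg : g = 0 ∨ g = 1 := by revert g; decide
    rcases hg with hg | hg <;> subst hg <;>
      simp only [if_pos rfl, if_neg h2, ite_true, ite_false] <;>
      fin_cases α <;> fin_cases β <;>
      simp [X3, Matrix.one_fin_three, Matrix.vecHead, Matrix.vecTail]
  constructor
  · intro R R'
    refine LinearMap.ext fun f => funext fun p => ?_
    obtain ⟨α, g, β⟩ := p
    by_cases h : R = R'
    · subst h
      simp only [Cedge, LinearMap.comp_apply, LinearMap.coe_mk, AddHom.coe_mk, if_pos rfl]
      rw [← mul_assoc, prod g R R α β]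
      simp
    · simp only [Cedge, LinearMap.comp_apply, LinearMap.coe_mk, AddHom.coe_mk, if_neg h,
        LinearMap.zero_apply, Pi.zero_apply]
      rw [← mul_assoc, prod g R R' α β]
      simp [h]
  · refine LinearMap.ext fun f => funext fun p => ?_
    obtain ⟨α, g, β⟩ := p
    simp only [LinearMap.coe_sum, Finset.sum_apply, Cedge, LinearMap.coe_mk, AddHom.coe_mk,
      LinearMap.id_apply]
    rw [← Finset.sum_mul, sum1, one_mul]
end
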